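/- arXiv:2403.14508 — 2 statements merged into one kernel-verified Lean document; each statement's English description precedes it below -/
import Mathlib

section
/- The linear smoothed log barrier function ψ̃_μ is convex on ℝ. -/
/-! The function `psi μ` is the C¹ gluing, at `a = -1/μ²`, of the convex function
`-(1/μ) log (-x)` with its tangent line at `a`. Its derivative `-1/(μ x)` for `x ≤ a` and `μ`
for `x ≥ a` is monotone, hence `psi μ` is convex. -/

/-- The linear smoothed log barrier function. -/
noncomputable def psi (μ x : ℝ) : ℝ :=
  if x ≤ -1 / μ ^ 2 then -(1 / μ) * Real.log (-x)
  else μ * x - (1 / μ) * Real.log (1 / μ ^ 2) + 1 / μ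

open Set

section Gluing

variable {f g f' g' : ℝ → ℝ} {a : ℝ}

theorem hasDerivAt_ite_le (hf : ∀ x ≤ a, HasDerivAt f (f' x) x)
    (hg : ∀ x ≥ a, HasDerivAt g (g' x) x) (hfg : f a = g a) (hfg' : f' a = g' a) (x : ℝ) :
    HasDerivAt (fun y => if y ≤ a then f y else g y) (if x ≤ a then f' x else g' x) x := by
  rcases lt_trichotomy x a with hxa | rfl | hax
  · rw [if_pos hxa.le]
    refine (hf x hxa.le).congr_of_eventuallyEq ?_
    filter_upwards [Iio_mem_nhds hxa] with y hy
    exact if_pos (le_of_lt hy)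
  · rw [if_pos le_rfl]
    have hleft : HasDerivWithinAt (fun y => if y ≤ x then f y else g y) (f' x) (Iic x) x :=
      (hf x le_rfl).hasDerivWithinAt.congr (fun y hy => if_pos hy) (if_pos le_rfl)
    have hright : HasDerivWithinAt (fun y => if y ≤ x then f y else g y) (f' x) (Ici x) x := by
      refine (hfg' ▸ (hg x le_rfl).hasDerivWithinAt).congr (fun y hy => ?_) (by simp [hfg])
      rcases (mem_Ici.mp hy).eq_or_lt with rfl | hxy
      · simp [hfg]
      · exact if_neg (not_le.mpr hxy)
    simpa using hleft.union hright
  · rw [if_neg (not_le.mpr hax)]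
    refine (hg x hax.le).congr_of_eventuallyEq ?_
    filter_upwards [Ioi_mem_nhds hax] with y hy
    exact if_neg (not_le.mpr hy)

theorem convexOn_univ_ite_le (hf : ∀ x ≤ a, HasDerivAt f (f' x) x)
    (hg : ∀ x ≥ a, HasDerivAt g (g' x) x) (hfg : f a = g a) (hfg' : f' a = g' a)
    (hf'_mono : MonotoneOn f' (Iic a)) (hg'_mono : MonotoneOn g' (Ici a)) :
    ConvexOn ℝ univ (fun y => if y ≤ a then f y else g y) := by
  have hderiv := hasDerivAt_ite_le hf hg hfg hfg'
  refine Monotone.convexOn_univ_of_deriv (fun x => (hderiv x).differentiableAt) ?_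
  rw [funext fun x => (hderiv x).deriv]
  refine MonotoneOn.Iic_union_Ici (a := a) (hf'_mono.congr fun x hx => (if_pos hx).symm) ?_
  refine hg'_mono.congr fun x hx => ?_
  rcases (mem_Ici.mp hx).eq_or_lt with rfl | hax
  · simp [hfg']
  · exact (if_neg (not_le.mpr hax)).symm

end Gluing

theorem hasDerivAt_mul_log_neg (c : ℝ) {x : ℝ} (hx : x ≠ 0) :
    HasDerivAt (fun y => c * Real.log (-y)) (c * x⁻¹) x := by
  simpa only [Real.log_neg_eq_log] using (Real.hasDerivAt_log hx).const_mul c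

theorem psi_convexOn (μ : ℝ) (hμ : 0 < μ) : ConvexOn ℝ Set.univ (psi μ) := by
  have ha : -1 / μ ^ 2 < 0 := div_neg_of_neg_of_pos (by norm_num) (by positivity)
  refine convexOn_univ_ite_le (f' := fun x => -(1 / μ) * x⁻¹) (g' := fun _ => μ)
    (fun x hx => hasDerivAt_mul_log_neg _ (hx.trans_lt ha).ne)
    (fun x _ => ((hasDerivAt_id x).const_mul μ |>.sub_const _ |>.add_const _).congr_deriv
      (mul_one μ)) ?value ?slope ?mono monotoneOn_const
  case value =>
    field_simp
    ring
  case slope => field_simp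
  case mono =>
    intro x hx y hy hxy
    exact mul_le_mul_of_nonpos_left (inv_antitoneOn_Iio (hx.trans_lt ha) (hy.trans_lt ha) hxy)
      (by simp [hμ.le])
end

section
/- For all x ≤ 0 and μ ≥ 1, the linear smoothed log barrier function satisfies the uniform bound ψ̃_μ(x) ≤ (2·log(μ) + 1)/μ, with equality at x = 0. -/
open Real

section

variable {μ x : ℝ}

theorem neg_one_div_sq_neg (hμ : μ ≠ 0) : -1 / μ ^ 2 < 0 := by
  rw [neg_div]
  exact neg_neg_of_pos (by positivity)

theorem psi_of_le_neg_one_div_sq (hx : x ≤ -1 / μ ^ 2) : psi μ x = -(1 / μ) * log (-x) :=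
  if_pos hx

theorem psi_of_neg_one_div_sq_lt (hx : -1 / μ ^ 2 < x) :
    psi μ x = μ * x + (2 * log μ + 1) / μ := by
  rw [psi, if_neg hx.not_ge, one_div (μ ^ 2), log_inv, log_pow]
  push_cast
  ring

theorem psi_le_of_le_neg_one_div_sq (hμ : 0 < μ) (hx : x ≤ -1 / μ ^ 2) :
    psi μ x ≤ 2 * log μ / μ := by
  have hlog : -(2 * log μ) ≤ log (-x) := by
    have hbound : 1 / μ ^ 2 ≤ -x := by rw [neg_div] at hx; linarith
    calc -(2 * log μ) = log (1 / μ ^ 2) := by rw [one_div, log_inv, log_pow]; push_cast; ring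
      _ ≤ log (-x) := log_le_log (by positivity) hbound
  rw [psi_of_le_neg_one_div_sq hx, neg_mul, one_div_mul_eq_div, ← neg_div]
  gcongr
  linarith

theorem lt_psi_of_neg_one_div_sq_lt (hμ : 0 < μ) (hx : -1 / μ ^ 2 < x) :
    2 * log μ / μ < psi μ x := by
  have hμx : -(1 / μ) < μ * x := by
    calc -(1 / μ) = μ * (-1 / μ ^ 2) := by field_simp
      _ < μ * x := mul_lt_mul_of_pos_left hx hμ
  rw [psi_of_neg_one_div_sq_lt hx, add_div, div_eq_mul_one_div 1 μ, one_mul]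
  linarith

/-- The value `2 log μ / μ` of both branches at the breakpoint `-1/μ²` separates them. -/
theorem psi_monotone (hμ : 0 < μ) : Monotone (psi μ) := by
  intro x y hxy
  by_cases hy : y ≤ -1 / μ ^ 2
  · have hx := hxy.trans hy
    rw [psi_of_le_neg_one_div_sq hx, psi_of_le_neg_one_div_sq hy, neg_mul, neg_mul, neg_le_neg_iff]
    have hy0 : 0 < -y := by linarith [neg_one_div_sq_neg hμ.ne']
    exact mul_le_mul_of_nonneg_left (log_le_log hy0 (by linarith)) (by positivity)
  · rw [not_le] at hy
    by_cases hx : x ≤ -1 / μ ^ 2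
    · exact (psi_le_of_le_neg_one_div_sq hμ hx).trans (lt_psi_of_neg_one_div_sq_lt hμ hy).le
    · rw [psi_of_neg_one_div_sq_lt (not_le.mp hx), psi_of_neg_one_div_sq_lt hy]
      gcongr

theorem psi_zero (hμ : μ ≠ 0) : psi μ 0 = (2 * log μ + 1) / μ := by
  rw [psi_of_neg_one_div_sq_lt (neg_one_div_sq_neg hμ), mul_zero, zero_add]

end

theorem psi_uniform_bound_nonpos (μ : ℝ) (hμ : 1 ≤ μ) :
    (∀ x ≤ (0 : ℝ), psi μ x ≤ (2 * Real.log μ + 1) / μ) ∧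
      psi μ 0 = (2 * Real.log μ + 1) / μ := by
  have hμ0 : 0 < μ := one_pos.trans_le hμ
  refine ⟨fun x hx => ?_, psi_zero hμ0.ne'⟩
  rw [← psi_zero hμ0.ne']
  exact psi_monotone hμ0 hx
end
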